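/- arXiv:2408.08934 — 2 statements merged into one kernel-verified Lean document; each statement's English description precedes it below -/
import Mathlib

section
/- For any randomized strategy of the defender on n > 1 configurations over T+1 timesteps, there exists an adaptive adversary (reward sequence depending on the defender's first action) such that the defender's policy regret, compared to the best constant configuration sequence in hindsight, is at least p·T, where p is the probability the defender's first action equals a designated configuration y. In particular if p is bounded away from 0, regret is Ω(T). -/
open Finset

/-- For any randomized defender strategy on `n > 1` configurations over `T+1` timesteps
(modelled by a finite sample space `Ω` with probability weights `w` and random action
sequence `A`, where `A ω 0` is the initial configuration and `A ω t` for `1 ≤ t ≤ T+1`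
are the played configurations), and any designated configuration `y`, there exists an
adaptive adversary — a reward function `r t` depending only on the first `t` actions —
such that the policy regret, i.e. the best constant configuration sequence's total reward
in hindsight minus the expected total reward (rewards minus switching costs) of the
defender, is at least `p * T`, where `p` is the probability that the first action is `y`. -/
theorem stmt_0
    (C : Type*) [Fintype C] [DecidableEq C] (hC : 1 < Fintype.card C) (y : C) (T : ℕ)
    (sc : C → C → ℝ)
    (hsc0 : ∀ s, sc s s = 0)
    (hsc_pos : ∀ s s', s ≠ s' → 0 < sc s s')
    (hsc_le : ∀ s s', s ≠ s' → sc s s' ≤ 1)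
    (Ω : Type*) [Fintype Ω]
    (w : Ω → ℝ) (hw_nonneg : ∀ ω, 0 ≤ w ω) (hw_sum : ∑ ω : Ω, w ω = 1)
    (A : Ω → ℕ → C) :
    ∃ r : ℕ → (ℕ → C) → ℝ,
      -- adaptivity: the reward at time t depends only on the actions up to time t
      (∀ t (s s' : ℕ → C), (∀ i ≤ t, s i = s' i) → r t s = r t s') ∧
      (Finset.univ.sup' ⟨y, Finset.mem_univ y⟩
          (fun b => ∑ t ∈ Finset.Icc 1 (T + 1), r t (fun _ => b))
        - ∑ ω : Ω, w ω *
            (∑ t ∈ Finset.Icc 1 (T + 1), (r t (A ω) - sc (A ω (t - 1)) (A ω t)))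
        ≥ (∑ ω ∈ Finset.univ.filter (fun ω => A ω 1 = y), w ω) * T) := by
  refine ⟨fun t s => if s 1 = y ∧ 1 < t then 0 else 1, ?_, ?_⟩
  · intro t s s' h
    by_cases ht : 1 < t
    · have h1 : s 1 = s' 1 := h 1 ht.le
      simp [h1]
    · simp [ht]
  · -- notation
    set p : ℝ := ∑ ω ∈ Finset.univ.filter (fun ω => A ω 1 = y), w ω with hp
    have hsc_nonneg : ∀ s s', 0 ≤ sc s s' := by
      intro s s'
      rcases eq_or_ne s s' with h | h
      · simp [h, hsc0]
      · exact (hsc_pos s s' h).le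
    -- sup' bound: pick b ≠ y
    obtain ⟨b, hb⟩ := Fintype.exists_ne_of_one_lt_card hC y
    have hsup : (T + 1 : ℝ) ≤ Finset.univ.sup' ⟨y, Finset.mem_univ y⟩
        (fun b => ∑ t ∈ Finset.Icc 1 (T + 1),
          (if b = y ∧ 1 < t then (0:ℝ) else 1)) := by
      refine le_trans ?_ (Finset.le_sup' _ (Finset.mem_univ b))
      have : ∀ t ∈ Finset.Icc 1 (T+1),
          (if (fun _ : ℕ => b) 1 = y ∧ 1 < t then (0:ℝ) else 1) = 1 := by
        intro t _; simp [hb]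
      rw [Finset.sum_congr rfl this, Finset.sum_const, Nat.card_Icc]
      simp
    -- per-ω reward sum
    have hrsum : ∀ ω : Ω, ∑ t ∈ Finset.Icc 1 (T + 1),
        (if A ω 1 = y ∧ 1 < t then (0:ℝ) else 1)
        = if A ω 1 = y then 1 else (T + 1 : ℝ) := by
      intro ω
      by_cases hy : A ω 1 = y
      · have : ∀ t ∈ Finset.Icc 1 (T+1),
            (if A ω 1 = y ∧ 1 < t then (0:ℝ) else 1)
            = if t = 1 then (1:ℝ) else 0 := by
          intro t ht
          rw [Finset.mem_Icc] at ht
          rcases eq_or_ne t 1 with h1 | h1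
          · simp [h1]
          · have : 1 < t := lt_of_le_of_ne ht.1 (Ne.symm h1)
            simp [hy, this, h1]
        rw [Finset.sum_congr rfl this, Finset.sum_ite_eq' (Finset.Icc 1 (T+1))]
        simp [hy]
      · have : ∀ t ∈ Finset.Icc 1 (T+1),
            (if A ω 1 = y ∧ 1 < t then (0:ℝ) else 1) = 1 := by
          intro t _; simp [hy]
        rw [Finset.sum_congr rfl this, Finset.sum_const, Nat.card_Icc]
        simp [hy]
    -- expected value bound
    have hE : ∑ ω : Ω, w ω *
        (∑ t ∈ Finset.Icc 1 (T + 1),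
          ((if A ω 1 = y ∧ 1 < t then (0:ℝ) else 1) - sc (A ω (t - 1)) (A ω t)))
        ≤ (T + 1 : ℝ) - p * T := by
      have step1 : ∀ ω : Ω, w ω *
          (∑ t ∈ Finset.Icc 1 (T + 1),
            ((if A ω 1 = y ∧ 1 < t then (0:ℝ) else 1) - sc (A ω (t - 1)) (A ω t)))
          ≤ w ω * (if A ω 1 = y then 1 else (T + 1 : ℝ)) := by
        intro ω
        refine mul_le_mul_of_nonneg_left ?_ (hw_nonneg ω)
        rw [← hrsum ω]
        refine Finset.sum_le_sum fun t _ => ?_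
        have := hsc_nonneg (A ω (t-1)) (A ω t)
        linarith
      refine le_trans (Finset.sum_le_sum fun ω _ => step1 ω) ?_
      have hsplit : ∑ ω : Ω, w ω * (if A ω 1 = y then 1 else (T + 1 : ℝ))
          = p * 1 + (1 - p) * (T + 1) := by
        rw [← Finset.sum_filter_add_sum_filter_not Finset.univ (fun ω => A ω 1 = y)]
        have h1 : ∑ ω ∈ Finset.univ.filter (fun ω => A ω 1 = y),
            w ω * (if A ω 1 = y then 1 else (T + 1 : ℝ)) = p * 1 := by
          rw [hp, Finset.sum_mul]
          refine Finset.sum_congr rfl fun ω hω => ?_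
          rw [Finset.mem_filter] at hω
          simp [hω.2]
        have h2 : ∑ ω ∈ Finset.univ.filter (fun ω => ¬ A ω 1 = y),
            w ω * (if A ω 1 = y then 1 else (T + 1 : ℝ)) = (1 - p) * (T + 1) := by
          have hq : ∑ ω ∈ Finset.univ.filter (fun ω => ¬ A ω 1 = y), w ω = 1 - p := by
            have := Finset.sum_filter_add_sum_filter_not Finset.univ
              (fun ω => A ω 1 = y) w
            rw [hw_sum] at this
            rw [hp]; linarith
          rw [← hq, Finset.sum_mul]
          refine Finset.sum_congr rfl fun ω hω => ?_
          rw [Finset.mem_filter] at hω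
          simp [hω.2]
        rw [h1, h2]
      rw [hsplit]
      have hp_nonneg : 0 ≤ p := Finset.sum_nonneg fun ω _ => hw_nonneg ω
      nlinarith [hp_nonneg]
    have hT : (0:ℝ) ≤ T := Nat.cast_nonneg T
    simp only [ge_iff_le]
    linarith [hE, hsup]
end

section
/- Let S, A be nonempty finite sets, next : S × A → S, γ ∈ [0,1), and reward functions r, r̃ with sup_{s,a} |r(s,a) - r̃(s,a)| ≤ ε. Let V* be the optimal value function under r, let π be an optimal policy under r̃ (i.e. greedy for the Bellman equations with rewards r̃), and let V^π be the value of π evaluated under the true rewards r. Then for every state s, V*(s) - V^π(s) ≤ 2ε/(1-γ). -/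
lemma contraction_bound {S : Type*} [Fintype S] [Nonempty S]
    (g : S → ℝ) (γ c : ℝ) (hγ0 : 0 ≤ γ) (hγ1 : γ < 1)
    (h : ∀ s, ∃ s', g s ≤ c + γ * g s') : ∀ s, g s ≤ c / (1 - γ) := by
  have hne : (Finset.univ : Finset S).Nonempty := Finset.univ_nonempty
  set M := Finset.univ.sup' hne g with hM
  obtain ⟨s₀, -, hs₀⟩ := Finset.exists_mem_eq_sup' hne g
  have hMle : M ≤ c / (1 - γ) := by
    obtain ⟨s', hs'⟩ := h s₀
    have h1 : g s' ≤ M := Finset.le_sup' g (Finset.mem_univ s')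
    have h2 : M ≤ c + γ * M := by
      calc M = g s₀ := hs₀
        _ ≤ c + γ * g s' := hs'
        _ ≤ c + γ * M := by nlinarith
    rw [le_div_iff₀ (by linarith)]
    nlinarith
  intro s
  exact le_trans (Finset.le_sup' g (Finset.mem_univ s)) hMle

/-- Deterministic discounted MDP with reward estimation error `ε`: if `V*` is the optimal
value function under the true rewards `r`, `Ṽ*` solves the Bellman optimality equations
under the estimated rewards `r̃` with policy `π` attaining the maximum (so `π` is optimal
for `r̃`), and `V^π` is the value of `π` under `r`, then
`V*(s) - V^π(s) ≤ 2ε / (1 - γ)` for every state `s`. -/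
theorem stmt_8
    (S A : Type*) [Fintype S] [Nonempty S] [Fintype A] [Nonempty A]
    (next : S → A → S) (γ : ℝ) (hγ0 : 0 ≤ γ) (hγ1 : γ < 1)
    (r rt : S → A → ℝ) (ε : ℝ) (hε : 0 ≤ ε)
    (herr : ∀ s a, |r s a - rt s a| ≤ ε)
    (Vstar Vt Vπ : S → ℝ) (π : S → A)
    (hVstar : ∀ s, Vstar s = Finset.univ.sup' Finset.univ_nonempty
      (fun a => r s a + γ * Vstar (next s a)))
    (hVt : ∀ s, Vt s = Finset.univ.sup' Finset.univ_nonempty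
      (fun a => rt s a + γ * Vt (next s a)))
    (hπ : ∀ s, Vt s = rt s (π s) + γ * Vt (next s (π s)))
    (hVπ : ∀ s, Vπ s = r s (π s) + γ * Vπ (next s (π s))) :
    ∀ s, Vstar s - Vπ s ≤ 2 * ε / (1 - γ) := by
  have h1 : ∀ s, Vstar s - Vt s ≤ ε / (1 - γ) := by
    apply contraction_bound _ γ ε hγ0 hγ1
    intro s
    obtain ⟨a, -, ha⟩ := Finset.exists_mem_eq_sup' (Finset.univ_nonempty)
      (fun a => r s a + γ * Vstar (next s a))
    refine ⟨next s a, ?_⟩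
    have hVs : Vstar s = r s a + γ * Vstar (next s a) := by rw [hVstar s, ha]
    have hVtge : rt s a + γ * Vt (next s a) ≤ Vt s := by
      rw [hVt s]
      exact Finset.le_sup' (fun a => rt s a + γ * Vt (next s a)) (Finset.mem_univ a)
    have := abs_le.mp (herr s a)
    rw [hVs]; nlinarith [this.1, this.2]
  have h2 : ∀ s, Vt s - Vπ s ≤ ε / (1 - γ) := by
    apply contraction_bound _ γ ε hγ0 hγ1
    intro s
    refine ⟨next s (π s), ?_⟩
    have := abs_le.mp (herr s (π s))
    rw [hπ s, hVπ s]; nlinarith [this.1, this.2]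
  intro s
  have := h1 s
  have := h2 s
  have : Vstar s - Vπ s ≤ ε / (1 - γ) + ε / (1 - γ) := by linarith
  calc Vstar s - Vπ s ≤ ε / (1 - γ) + ε / (1 - γ) := this
    _ = 2 * ε / (1 - γ) := by ring
end
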